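/- Let $0 < d \le 1 \le u$ with $u \ne d$, and set $\tilde{k}_0(n,u,d) = \lfloor n \ln(1/d)/\ln(u/d) \rfloor$, $A(n,u,d) = (1/2)^n \sum_{k=0}^{\tilde{k}_0(n,u,d)} \binom{n}{k} u^k d^{n-k}$, $B(n,u,d) = (1/2)^{n-1} \sum_{k=\tilde{k}_0(n,u,d)+1}^{n} \binom{n}{k}$, and $G(n,u,d) = -1 + A(n,u,d) + B(n,u,d)$. Then as $n \to \infty$, $G(n,u,d)$ converges to $1$ if $ud > 1$, to $0$ if $ud = 1$, and to $-1$ if $ud < 1$. -/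

import Mathlib

open Filter

/-- Threshold separating losing from winning numbers of heads. -/
noncomputable def ktilde (n : ℕ) (u d : ℝ) : ℕ :=
  ⌊(n : ℝ) * Real.log (1/d) / Real.log (u/d)⌋₊

/-- Contribution of the losing outcomes to the expected payout (fair coin). -/
noncomputable def A (n : ℕ) (u d : ℝ) : ℝ :=
  (1/2 : ℝ)^n * ∑ k ∈ Finset.range (ktilde n u d + 1), (n.choose k : ℝ) * u^k * d^(n-k)

/-- Twice the probability of winning (fair coin). -/
noncomputable def B (n : ℕ) (u d : ℝ) : ℝ :=
  (1/2 : ℝ)^(n-1) * ∑ k ∈ Finset.Icc (ktilde n u d + 1) n, (n.choose k : ℝ)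

/-- Expected net profit (for stake 1) after `n` rounds, fair coin. -/
noncomputable def G (n : ℕ) (u d : ℝ) : ℝ := -1 + A n u d + B n u d

/-!
Write `w k = u ^ k * d ^ (n - k)` for the final score after `k` heads. Taking logarithms, the
threshold `ktilde n u d` is exactly the largest `k ≤ n` with `w k ≤ 1`; hence `A` is at most the
probability of at most `ktilde` heads, and `B` is twice the probability of more than `ktilde` heads.

When `u * d ≠ 1` these probabilities decay geometrically by exponential tilting: on the event in
question `1 ≤ w k ^ s` (or `w k ≤ w k ^ s`) for a suitable exponent `s`, and the binomial theorem
bounds the tilted sum by `((a ^ s + b ^ s) / 2) ^ n`, with `(a, b) = (u, d)` or `(u⁻¹, d⁻¹)`.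
Since the derivative of `s ↦ a ^ s + b ^ s` at `0` is `log (a * b) < 0`, some `s ∈ (0, 1)` makes
this base less than `1`.

When `u * d = 1` the threshold is `n / 2`. The symmetry `C(n, k) = C(n, n - k)` puts `B` within
`C(n, n / 2) / 2 ^ n` of `1`, and `w k = d ^ (n - 2 k)` decays geometrically away from the middle,
so `A = O(C(n, n / 2) / 2 ^ n)`. Finally `C(2m, m) ^ 2 * (2m + 1) ≤ 16 ^ m` makes the central
term vanish.
-/

open Finset

theorem half_pow_mul_sum_choose_mul_le {n : ℕ} {S : Finset ℕ} (hS : S ⊆ range (n + 1))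
    {f : ℕ → ℝ} {a b : ℝ} (ha : 0 ≤ a) (hb : 0 ≤ b) (hf : ∀ k ∈ S, f k ≤ a ^ k * b ^ (n - k)) :
    (1 / 2 : ℝ) ^ n * ∑ k ∈ S, (n.choose k : ℝ) * f k ≤ ((a + b) / 2) ^ n := by
  have hsum : ∑ k ∈ S, (n.choose k : ℝ) * f k ≤ (a + b) ^ n := calc
    _ ≤ ∑ k ∈ S, (n.choose k : ℝ) * (a ^ k * b ^ (n - k)) :=
      sum_le_sum fun k hk => mul_le_mul_of_nonneg_left (hf k hk) (by positivity)
    _ ≤ ∑ k ∈ range (n + 1), (n.choose k : ℝ) * (a ^ k * b ^ (n - k)) :=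
      sum_le_sum_of_subset_of_nonneg hS fun _ _ _ => by positivity
    _ = (a + b) ^ n := by rw [add_pow]; exact sum_congr rfl fun _ _ => by ring
  calc _ ≤ (1 / 2 : ℝ) ^ n * (a + b) ^ n := by gcongr
    _ = _ := by rw [← mul_pow]; ring

theorem rpow_pow_mul_rpow_pow {x y : ℝ} (hx : 0 ≤ x) (hy : 0 ≤ y) (s : ℝ) (k m : ℕ) :
    (x ^ s) ^ k * (y ^ s) ^ m = (x ^ k * y ^ m) ^ s := by
  rw [Real.rpow_pow_comm hx, Real.rpow_pow_comm hy, Real.mul_rpow (by positivity) (by positivity)]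

theorem exists_rpow_add_rpow_lt_two {a b : ℝ} (ha : 0 < a) (hb : 0 < b) (hab : a * b < 1) :
    ∃ s ∈ Set.Ioo (0 : ℝ) 1, a ^ s + b ^ s < 2 := by
  have hderiv : HasDerivAt (fun s : ℝ => a ^ s + b ^ s) (Real.log a + Real.log b) 0 := by
    simpa using (Real.hasStrictDerivAt_const_rpow ha 0).hasDerivAt.fun_add
      (Real.hasStrictDerivAt_const_rpow hb 0).hasDerivAt
  have hneg : Real.log a + Real.log b < 0 := by
    rw [← Real.log_mul ha.ne' hb.ne']
    exact Real.log_neg (by positivity) hab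
  obtain ⟨s, hslope, hs⟩ := (((hderiv.hasDerivWithinAt (s := Set.Ioi 0)).limsup_slope_le'
    (lt_irrefl 0) hneg).and (Ioo_mem_nhdsGT one_pos)).exists
  refine ⟨s, hs, ?_⟩
  rw [slope_def_field, sub_zero, div_lt_iff₀ hs.1, zero_mul, Real.rpow_zero, Real.rpow_zero]
    at hslope
  linarith

theorem sum_range_add_sum_Icc_choose {n m : ℕ} (hm : m ≤ n) :
    ∑ k ∈ range (m + 1), n.choose k + ∑ k ∈ Icc (m + 1) n, n.choose k = 2 ^ n := by
  rw [← Nat.sum_range_choose, range_eq_Ico, range_eq_Ico, ← Ico_add_one_right_eq_Icc,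
    sum_Ico_consecutive _ (Nat.zero_le _) (by omega)]

theorem sum_Icc_choose_eq_sum_range {n m : ℕ} (hm : m ≤ n) :
    ∑ k ∈ Icc (m + 1) n, n.choose k = ∑ k ∈ range (n - m), n.choose k := by
  refine sum_nbij' (fun k => n - k) (fun k => n - k) ?_ ?_ ?_ ?_ ?_ <;>
    intro k hk <;> simp only [mem_Icc, mem_range] at hk ⊢
  · omega
  · omega
  · omega
  · omega
  · exact (Nat.choose_symm (by omega)).symm

theorem two_mul_sum_Icc_choose_half_le (n : ℕ) :
    2 * ∑ k ∈ Icc (n / 2 + 1) n, n.choose k ≤ 2 ^ n := by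
  have hsplit := sum_range_add_sum_Icc_choose (n := n) (m := n / 2) (by omega)
  have hrefl : ∑ k ∈ Icc (n / 2 + 1) n, n.choose k ≤ ∑ k ∈ range (n / 2 + 1), n.choose k := by
    rw [sum_Icc_choose_eq_sum_range (by omega)]
    exact sum_le_sum_of_subset (range_subset_range.2 (by omega))
  omega

theorem two_pow_le_two_mul_sum_Icc_choose_half_add (n : ℕ) :
    2 ^ n ≤ 2 * ∑ k ∈ Icc (n / 2 + 1) n, n.choose k + n.choose (n / 2) := by
  have hsplit := sum_range_add_sum_Icc_choose (n := n) (m := n / 2) (by omega)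
  have hrefl : ∑ k ∈ range (n / 2), n.choose k ≤ ∑ k ∈ Icc (n / 2 + 1) n, n.choose k := by
    rw [sum_Icc_choose_eq_sum_range (by omega)]
    exact sum_le_sum_of_subset (range_subset_range.2 (by omega))
  rw [sum_range_succ] at hsplit
  omega

theorem centralBinom_sq_mul_le (m : ℕ) : m.centralBinom ^ 2 * (2 * m + 1) ≤ 16 ^ m := by
  induction m with
  | zero => simp
  | succ j ih =>
    refine Nat.le_of_mul_le_mul_left (c := (j + 1) ^ 2) ?_ (by positivity)
    calc (j + 1) ^ 2 * ((j + 1).centralBinom ^ 2 * (2 * (j + 1) + 1))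
        = ((j + 1) * (j + 1).centralBinom) ^ 2 * (2 * j + 3) := by ring
      _ = 4 * (2 * j + 1) * (2 * j + 3) * (j.centralBinom ^ 2 * (2 * j + 1)) := by
          rw [Nat.succ_mul_centralBinom_succ]; ring
      _ ≤ 4 * (2 * j + 1) * (2 * j + 3) * 16 ^ j := Nat.mul_le_mul_left _ ih
      _ ≤ 16 * (j + 1) ^ 2 * 16 ^ j := Nat.mul_le_mul_right _ (by nlinarith)
      _ = (j + 1) ^ 2 * 16 ^ (j + 1) := by ring

theorem choose_half_le_two_mul_centralBinom (n : ℕ) :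
    n.choose (n / 2) ≤ 2 * (n / 2).centralBinom := by
  obtain ⟨m, rfl | rfl⟩ := Nat.even_or_odd' n
  · rw [show 2 * m / 2 = m by omega, Nat.centralBinom_eq_two_mul_choose]
    omega
  · rw [show (2 * m + 1) / 2 = m by omega, ← Nat.choose_symm_half, Nat.choose_succ_succ']
    have := Nat.choose_le_centralBinom m m
    have := Nat.choose_le_centralBinom (m + 1) m
    omega

theorem tendsto_centralBinom_div_four_pow :
    Tendsto (fun m : ℕ => (m.centralBinom : ℝ) / 4 ^ m) atTop (nhds 0) := by
  have hsq : ∀ m : ℕ, ((m.centralBinom : ℝ) / 4 ^ m) ^ 2 ≤ 1 / ((m : ℝ) + 1) := fun m => by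
    have h : (m.centralBinom : ℝ) ^ 2 * (2 * m + 1) ≤ 16 ^ m := by
      exact_mod_cast centralBinom_sq_mul_le m
    rw [div_pow, ← pow_mul, mul_comm, pow_mul, div_le_div_iff₀ (by positivity) (by positivity)]
    norm_num
    nlinarith [sq_nonneg (m.centralBinom : ℝ)]
  have h := (squeeze_zero (fun _ => sq_nonneg _) hsq tendsto_one_div_add_atTop_nhds_zero_nat).sqrt
  rw [Real.sqrt_zero] at h
  exact h.congr fun m => Real.sqrt_sq (by positivity)

theorem tendsto_half_pow_mul_choose_half :
    Tendsto (fun n : ℕ => (1 / 2 : ℝ) ^ n * n.choose (n / 2)) atTop (nhds 0) := by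
  have hbound : ∀ n : ℕ, (1 / 2 : ℝ) ^ n * n.choose (n / 2) ≤
      2 * (((n / 2).centralBinom : ℝ) / 4 ^ (n / 2)) := fun n => by
    have hc : (n.choose (n / 2) : ℝ) ≤ 2 * (n / 2).centralBinom := by
      exact_mod_cast choose_half_le_two_mul_centralBinom n
    have hpow : (4 : ℝ) ^ (n / 2) ≤ 2 ^ n := by
      rw [show (4 : ℝ) = 2 ^ 2 by norm_num, ← pow_mul]
      exact pow_le_pow_right₀ one_le_two (by omega)
    rw [one_div_pow, one_div_mul_eq_div, div_le_iff₀ (by positivity)]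
    calc (n.choose (n / 2) : ℝ) ≤ 2 * (n / 2).centralBinom := hc
      _ = 2 * ((n / 2).centralBinom / 4 ^ (n / 2)) * 4 ^ (n / 2) := by field_simp
      _ ≤ 2 * ((n / 2).centralBinom / 4 ^ (n / 2)) * 2 ^ n := by gcongr
  have hlim := (tendsto_centralBinom_div_four_pow.comp
    (Nat.tendsto_div_const_atTop two_ne_zero)).const_mul 2
  rw [mul_zero] at hlim
  exact squeeze_zero (fun _ => by positivity) hbound hlim

theorem sum_choose_mul_pow_le_of_mul_eq_one (n : ℕ) {u d : ℝ} (hd0 : 0 ≤ d) (hd1 : d < 1)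
    (hud : u * d = 1) :
    ∑ k ∈ range (n / 2 + 1), (n.choose k : ℝ) * u ^ k * d ^ (n - k) ≤
      n.choose (n / 2) * (1 - d ^ 2)⁻¹ := by
  have hterm : ∀ k ∈ range (n / 2 + 1),
      (n.choose k : ℝ) * u ^ k * d ^ (n - k) ≤ n.choose (n / 2) * (d ^ 2) ^ (n / 2 - k) := by
    intro k hk
    have hk : k ≤ n / 2 := Nat.lt_succ_iff.1 (mem_range.1 hk)
    have hw : u ^ k * d ^ (n - k) = d ^ (n - 2 * k) := by
      rw [show n - k = k + (n - 2 * k) by omega, pow_add, ← mul_assoc, ← mul_pow, hud, one_pow,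
        one_mul]
    rw [mul_assoc, hw, ← pow_mul]
    exact mul_le_mul (Nat.cast_le.2 (Nat.choose_le_middle k n))
      (pow_le_pow_of_le_one hd0 hd1.le (by omega)) (by positivity) (by positivity)
  calc _ ≤ ∑ k ∈ range (n / 2 + 1), (n.choose (n / 2) : ℝ) * (d ^ 2) ^ (n / 2 - k) :=
        sum_le_sum hterm
    _ = n.choose (n / 2) * ∑ j ∈ range (n / 2 + 1), (d ^ 2) ^ j := by
        rw [← mul_sum, ← sum_range_reflect]
        exact congrArg _ (sum_congr rfl fun j hj => by rw [mem_range] at hj; congr 1; omega)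
    _ ≤ n.choose (n / 2) * (1 - d ^ 2)⁻¹ := by
        gcongr
        exact sum_le_hasSum _ (fun _ _ => by positivity)
          (hasSum_geometric_of_lt_one (by positivity) (by nlinarith))

noncomputable def probHeadsLE (n m : ℕ) : ℝ :=
  (1 / 2 : ℝ) ^ n * ∑ k ∈ range (m + 1), (n.choose k : ℝ)

noncomputable def probHeadsGT (n m : ℕ) : ℝ :=
  (1 / 2 : ℝ) ^ n * ∑ k ∈ Icc (m + 1) n, (n.choose k : ℝ)

theorem probHeadsLE_nonneg (n m : ℕ) : 0 ≤ probHeadsLE n m := by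
  unfold probHeadsLE; positivity

theorem probHeadsGT_nonneg (n m : ℕ) : 0 ≤ probHeadsGT n m := by
  unfold probHeadsGT; positivity

theorem probHeadsLE_add_probHeadsGT {n m : ℕ} (hm : m ≤ n) :
    probHeadsLE n m + probHeadsGT n m = 1 := by
  have h : ∑ k ∈ range (m + 1), (n.choose k : ℝ) + ∑ k ∈ Icc (m + 1) n, (n.choose k : ℝ) =
      2 ^ n := by
    exact_mod_cast sum_range_add_sum_Icc_choose hm
  rw [probHeadsLE, probHeadsGT, ← mul_add, h, ← mul_pow]
  norm_num

theorem two_mul_probHeadsGT_half_le_one (n : ℕ) : 2 * probHeadsGT n (n / 2) ≤ 1 := by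
  have h : 2 * ∑ k ∈ Icc (n / 2 + 1) n, (n.choose k : ℝ) ≤ 2 ^ n := by
    exact_mod_cast two_mul_sum_Icc_choose_half_le n
  rw [probHeadsGT, mul_left_comm]
  calc _ ≤ (1 / 2 : ℝ) ^ n * 2 ^ n := by gcongr
    _ = 1 := by rw [← mul_pow]; norm_num

theorem one_sub_le_two_mul_probHeadsGT_half (n : ℕ) :
    1 - (1 / 2 : ℝ) ^ n * n.choose (n / 2) ≤ 2 * probHeadsGT n (n / 2) := by
  have h : (2 : ℝ) ^ n ≤ 2 * ∑ k ∈ Icc (n / 2 + 1) n, (n.choose k : ℝ) + n.choose (n / 2) := by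
    exact_mod_cast two_pow_le_two_mul_sum_Icc_choose_half_add n
  have h1 : (1 / 2 : ℝ) ^ n * 2 ^ n = 1 := by rw [← mul_pow]; norm_num
  have h2 : 1 ≤ 2 * probHeadsGT n (n / 2) + (1 / 2 : ℝ) ^ n * n.choose (n / 2) := calc
    1 = (1 / 2 : ℝ) ^ n * 2 ^ n := h1.symm
    _ ≤ (1 / 2 : ℝ) ^ n * (2 * ∑ k ∈ Icc (n / 2 + 1) n, (n.choose k : ℝ) + n.choose (n / 2)) := by
      gcongr
    _ = _ := by rw [probHeadsGT]; ring
  linarith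

theorem pow_mul_pow_le_one_iff_le_ktilde {n k : ℕ} {u d : ℝ} (hd0 : 0 < d) (hd1 : d ≤ 1)
    (hdu : d < u) (hk : k ≤ n) : u ^ k * d ^ (n - k) ≤ 1 ↔ k ≤ ktilde n u d := by
  have hu0 : 0 < u := hd0.trans hdu
  have hL : 0 < Real.log (u / d) := Real.log_pos ((one_lt_div hd0).2 hdu)
  have hlog : Real.log (u ^ k * d ^ (n - k)) = k * Real.log (u / d) - n * Real.log (1 / d) := by
    rw [Real.log_mul (by positivity) (by positivity), Real.log_pow, Real.log_pow,
      Real.log_div hu0.ne' hd0.ne', one_div, Real.log_inv, Nat.cast_sub hk]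
    ring
  have hα : 0 ≤ n * Real.log (1 / d) / Real.log (u / d) :=
    div_nonneg (mul_nonneg n.cast_nonneg (Real.log_nonneg (one_le_one_div hd0 hd1))) hL.le
  rw [ktilde, Nat.le_floor_iff hα, le_div_iff₀ hL, ← Real.log_nonpos_iff (by positivity), hlog,
    sub_nonpos]

theorem ktilde_le_self (n : ℕ) {u d : ℝ} (hd0 : 0 < d) (hd1 : d ≤ 1) (hu : 1 ≤ u) :
    ktilde n u d ≤ n := by
  have hud : 1 / d ≤ u / d := div_le_div_of_nonneg_right hu hd0.le
  refine Nat.floor_le_of_le (div_le_of_le_mul₀ (Real.log_nonneg ?_) n.cast_nonneg ?_)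
  · exact (one_le_one_div hd0 hd1).trans hud
  · exact mul_le_mul_of_nonneg_left (Real.log_le_log (by positivity) hud) n.cast_nonneg

theorem ktilde_of_mul_eq_one (n : ℕ) {u d : ℝ} (hd0 : 0 < d) (hd1 : d < 1) (hud : u * d = 1) :
    ktilde n u d = n / 2 := by
  have hu : u / d = (1 / d) ^ 2 := by field_simp; linarith
  have hlog : Real.log (1 / d) ≠ 0 := (Real.log_pos ((one_lt_div hd0).2 hd1)).ne'
  rw [ktilde, hu, Real.log_pow, ← Nat.floor_div_eq_div (K := ℝ)]
  congr 1
  field_simp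

theorem A_nonneg (n : ℕ) {u d : ℝ} (hu : 0 ≤ u) (hd : 0 ≤ d) : 0 ≤ A n u d := by
  unfold A; positivity

theorem A_le_probHeadsLE (n : ℕ) {u d : ℝ} (hd0 : 0 < d) (hd1 : d ≤ 1) (hu : 1 ≤ u)
    (hdu : d < u) : A n u d ≤ probHeadsLE n (ktilde n u d) := by
  unfold A probHeadsLE
  gcongr with k hk
  have hk : k ≤ ktilde n u d := Nat.lt_succ_iff.1 (mem_range.1 hk)
  rw [mul_assoc]
  refine mul_le_of_le_one_right (Nat.cast_nonneg _) ?_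
  exact (pow_mul_pow_le_one_iff_le_ktilde hd0 hd1 hdu (hk.trans (ktilde_le_self n hd0 hd1 hu))).2 hk

theorem B_eventuallyEq (u d : ℝ) :
    (fun n => B n u d) =ᶠ[atTop] fun n => 2 * probHeadsGT n (ktilde n u d) := by
  filter_upwards [eventually_ge_atTop 1] with n hn
  obtain ⟨m, rfl⟩ := Nat.exists_eq_add_of_le' hn
  rw [B, probHeadsGT, Nat.add_sub_cancel, pow_succ]
  ring

theorem tendsto_G {u d a b : ℝ} (hA : Tendsto (fun n => A n u d) atTop (nhds a))
    (hB : Tendsto (fun n => B n u d) atTop (nhds b)) :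
    Tendsto (fun n => G n u d) atTop (nhds (-1 + a + b)) :=
  (tendsto_const_nhds.add hA).add hB

theorem tendsto_probHeadsLE_ktilde_of_one_lt_mul {u d : ℝ} (hd0 : 0 < d) (hd1 : d ≤ 1)
    (hu : 1 ≤ u) (hdu : d < u) (hud : 1 < u * d) :
    Tendsto (fun n => probHeadsLE n (ktilde n u d)) atTop (nhds 0) := by
  have hu0 : 0 < u := hd0.trans hdu
  obtain ⟨s, hs, hlt⟩ := exists_rpow_add_rpow_lt_two (inv_pos.2 hu0) (inv_pos.2 hd0)
    (by rw [← mul_inv]; exact inv_lt_one_of_one_lt₀ hud)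
  refine squeeze_zero (fun n => probHeadsLE_nonneg _ _) (fun n => ?_)
    (tendsto_pow_atTop_nhds_zero_of_lt_one (by positivity)
      (by linarith : ((u⁻¹) ^ s + (d⁻¹) ^ s) / 2 < 1))
  have hkn := ktilde_le_self n hd0 hd1 hu
  have hbound : ∀ k ∈ range (ktilde n u d + 1), (1 : ℝ) ≤
      ((u⁻¹) ^ s) ^ k * ((d⁻¹) ^ s) ^ (n - k) := by
    intro k hk
    have hk : k ≤ ktilde n u d := Nat.lt_succ_iff.1 (mem_range.1 hk)
    have hw := (pow_mul_pow_le_one_iff_le_ktilde hd0 hd1 hdu (hk.trans hkn)).2 hk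
    rw [rpow_pow_mul_rpow_pow (by positivity) (by positivity), inv_pow, inv_pow, ← mul_inv]
    exact Real.one_le_rpow ((one_le_inv₀ (by positivity)).2 hw) hs.1.le
  simpa [probHeadsLE] using half_pow_mul_sum_choose_mul_le (f := fun _ => 1)
    (range_subset_range.2 (by omega : ktilde n u d + 1 ≤ n + 1)) (by positivity) (by positivity)
    hbound

theorem tendsto_A_of_mul_lt_one {u d : ℝ} (hd0 : 0 < d) (hd1 : d ≤ 1) (hu : 1 ≤ u)
    (hdu : d < u) (hud : u * d < 1) : Tendsto (fun n => A n u d) atTop (nhds 0) := by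
  have hu0 : 0 < u := hd0.trans hdu
  obtain ⟨s, hs, hlt⟩ := exists_rpow_add_rpow_lt_two hu0 hd0 hud
  refine squeeze_zero (fun n => A_nonneg n hu0.le hd0.le) (fun n => ?_)
    (tendsto_pow_atTop_nhds_zero_of_lt_one (by positivity) (by linarith : (u ^ s + d ^ s) / 2 < 1))
  have hkn := ktilde_le_self n hd0 hd1 hu
  have hbound : ∀ k ∈ range (ktilde n u d + 1), u ^ k * d ^ (n - k) ≤
      (u ^ s) ^ k * (d ^ s) ^ (n - k) := by
    intro k hk
    have hk : k ≤ ktilde n u d := Nat.lt_succ_iff.1 (mem_range.1 hk)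
    have hw := (pow_mul_pow_le_one_iff_le_ktilde hd0 hd1 hdu (hk.trans hkn)).2 hk
    rw [rpow_pow_mul_rpow_pow hu0.le hd0.le]
    exact Real.self_le_rpow_of_le_one (by positivity) hw hs.2.le
  simpa only [A, mul_assoc] using half_pow_mul_sum_choose_mul_le
    (range_subset_range.2 (by omega : ktilde n u d + 1 ≤ n + 1)) (by positivity) (by positivity)
    hbound

theorem tendsto_probHeadsGT_ktilde_of_mul_lt_one {u d : ℝ} (hd0 : 0 < d) (hd1 : d ≤ 1)
    (hdu : d < u) (hud : u * d < 1) :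
    Tendsto (fun n => probHeadsGT n (ktilde n u d)) atTop (nhds 0) := by
  have hu0 : 0 < u := hd0.trans hdu
  obtain ⟨s, hs, hlt⟩ := exists_rpow_add_rpow_lt_two hu0 hd0 hud
  refine squeeze_zero (fun n => probHeadsGT_nonneg _ _) (fun n => ?_)
    (tendsto_pow_atTop_nhds_zero_of_lt_one (by positivity) (by linarith : (u ^ s + d ^ s) / 2 < 1))
  have hbound : ∀ k ∈ Icc (ktilde n u d + 1) n, (1 : ℝ) ≤
      (u ^ s) ^ k * (d ^ s) ^ (n - k) := by
    intro k hk
    obtain ⟨hk, hkn⟩ := mem_Icc.1 hk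
    have hw := (pow_mul_pow_le_one_iff_le_ktilde hd0 hd1 hdu hkn).not.2 (by omega)
    rw [rpow_pow_mul_rpow_pow hu0.le hd0.le]
    exact Real.one_le_rpow (le_of_not_ge hw) hs.1.le
  simpa [probHeadsGT] using half_pow_mul_sum_choose_mul_le (f := fun _ => 1)
    (fun k hk => mem_range.2 (Nat.lt_succ_iff.2 (mem_Icc.1 hk).2)) (by positivity) (by positivity)
    hbound

theorem tendsto_G_of_one_lt_mul {u d : ℝ} (hd0 : 0 < d) (hd1 : d ≤ 1) (hu : 1 ≤ u)
    (hdu : d < u) (hud : 1 < u * d) : Tendsto (fun n => G n u d) atTop (nhds 1) := by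
  have hP := tendsto_probHeadsLE_ktilde_of_one_lt_mul hd0 hd1 hu hdu hud
  have hA : Tendsto (fun n => A n u d) atTop (nhds 0) :=
    squeeze_zero (fun n => A_nonneg n (by linarith) hd0.le)
      (fun n => A_le_probHeadsLE n hd0 hd1 hu hdu) hP
  have hGT : ∀ n, 2 * probHeadsGT n (ktilde n u d) = 2 * (1 - probHeadsLE n (ktilde n u d)) :=
    fun n => by rw [← probHeadsLE_add_probHeadsGT (ktilde_le_self n hd0 hd1 hu)]; ring
  have hB : Tendsto (fun n => B n u d) atTop (nhds 2) := by
    refine Tendsto.congr' (B_eventuallyEq u d).symm ?_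
    simpa [hGT] using ((tendsto_const_nhds (x := (1 : ℝ))).sub hP).const_mul 2
  convert tendsto_G hA hB using 2
  norm_num

theorem tendsto_G_of_mul_eq_one {u d : ℝ} (hd0 : 0 < d) (hd1 : d ≤ 1) (hdu : d < u)
    (hud : u * d = 1) : Tendsto (fun n => G n u d) atTop (nhds 0) := by
  have hd1' : d < 1 := hd1.lt_of_ne fun h => by subst h; linarith
  have hk (n : ℕ) : ktilde n u d = n / 2 := ktilde_of_mul_eq_one n hd0 hd1' hud
  have hc := tendsto_half_pow_mul_choose_half
  have hA : Tendsto (fun n => A n u d) atTop (nhds 0) := by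
    refine squeeze_zero (fun n => A_nonneg n (by linarith) hd0.le) (fun n => ?_)
      (by simpa only [zero_mul] using hc.mul_const (1 - d ^ 2)⁻¹)
    rw [A, hk, mul_assoc _ _ (1 - d ^ 2)⁻¹]
    exact mul_le_mul_of_nonneg_left (sum_choose_mul_pow_le_of_mul_eq_one n hd0.le hd1' hud)
      (by positivity)
  have hB : Tendsto (fun n => B n u d) atTop (nhds 1) := by
    refine Tendsto.congr' (B_eventuallyEq u d).symm ?_
    simp only [hk]
    exact tendsto_of_tendsto_of_tendsto_of_le_of_le
      (by simpa using (tendsto_const_nhds (x := (1 : ℝ))).sub hc) tendsto_const_nhds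
      one_sub_le_two_mul_probHeadsGT_half two_mul_probHeadsGT_half_le_one
  convert tendsto_G hA hB using 2
  norm_num

theorem tendsto_G_of_mul_lt_one {u d : ℝ} (hd0 : 0 < d) (hd1 : d ≤ 1) (hu : 1 ≤ u)
    (hdu : d < u) (hud : u * d < 1) : Tendsto (fun n => G n u d) atTop (nhds (-1)) := by
  have hB : Tendsto (fun n => B n u d) atTop (nhds 0) := by
    refine Tendsto.congr' (B_eventuallyEq u d).symm ?_
    simpa using (tendsto_probHeadsGT_ktilde_of_mul_lt_one hd0 hd1 hdu hud).const_mul 2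
  convert tendsto_G (tendsto_A_of_mul_lt_one hd0 hd1 hu hdu hud) hB using 2
  norm_num

theorem expected_net_profit_threshold (u d : ℝ)
    (hd0 : 0 < d) (hd1 : d ≤ 1) (hu : 1 ≤ u) (hne : u ≠ d) :
    (1 < u * d → Tendsto (fun n : ℕ => G n u d) atTop (nhds 1)) ∧
    (u * d = 1 → Tendsto (fun n : ℕ => G n u d) atTop (nhds 0)) ∧
    (u * d < 1 → Tendsto (fun n : ℕ => G n u d) atTop (nhds (-1))) := by
  have hdu : d < u := (hd1.trans hu).lt_of_ne hne.symm
  exact ⟨tendsto_G_of_one_lt_mul hd0 hd1 hu hdu, tendsto_G_of_mul_eq_one hd0 hd1 hdu,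
    tendsto_G_of_mul_lt_one hd0 hd1 hu hdu⟩
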